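/- arXiv:2201.09825 — 5 statements merged into one kernel-verified Lean document; each statement's English description precedes it below -/
import Mathlib

section
/- If the M-set M (with left multiplication as action) is nominal, then every M-set is nominal. In particular, for M = the finitary permutation group on a countably infinite set 𝔸, M with left multiplication is not a nominal M-set. -/
/-- An `M`-set structure on `X`, for a submonoid `M ≤ A^A`. -/
structure MSetOn {A : Type*} (M : Submonoid (Function.End A)) (X : Type*) where
  act : M → X → X
  one_act : ∀ x, act 1 x = x
  mul_act : ∀ m m' x, act (m * m') x = act m (act m' x)

/-- `S ⊆ A` supports `x`: monoid elements agreeing on `S` act identically on `x`. -/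
def MSetOn.Supports {A X : Type*} {M : Submonoid (Function.End A)} (ms : MSetOn M X)
    (S : Set A) (x : X) : Prop :=
  ∀ m m' : M, (∀ a ∈ S, m.1 a = m'.1 a) → ms.act m x = ms.act m' x

/-- An `M`-set is nominal if every element has a finite support. -/
def MSetOn.Nominal {A X : Type*} {M : Submonoid (Function.End A)} (ms : MSetOn M X) : Prop :=
  ∀ x, ∃ S : Set A, S.Finite ∧ ms.Supports S x

/-- `M` acting on itself by left multiplication. -/
def selfAction {A : Type*} (M : Submonoid (Function.End A)) : MSetOn M M where
  act ℓ m := ℓ * m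
  one_act := one_mul
  mul_act := mul_assoc

/-- The finitary permutation monoid on `𝔸`: bijections fixing all but finitely many points. -/
def finPerm (𝔸 : Type*) : Submonoid (Function.End 𝔸) where
  carrier := {f | Function.Bijective f ∧ {a | f a ≠ a}.Finite}
  one_mem' := by
    refine ⟨Function.bijective_id, Set.Finite.subset Set.finite_empty ?_⟩
    intro a ha
    exact absurd rfl ha
  mul_mem' := by
    rintro f g ⟨hf1, hf2⟩ ⟨hg1, hg2⟩
    refine ⟨hf1.comp hg1, Set.Finite.subset (hf2.union hg2) ?_⟩
    intro a ha
    by_contra hmem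
    simp only [Set.mem_union, Set.mem_setOf_eq, not_or, not_not] at hmem
    exact ha (by show f (g a) = a; rw [hmem.2, hmem.1])

/-- If the `M`-set `M` (with left multiplication) is nominal then every
`M`-set is nominal; in particular for the finitary permutation group on a countably
infinite set `𝔸`, `M` with left multiplication is not a nominal `M`-set. -/
theorem nominal_selfAction_implies_all_nominal_and_finPerm_not_nominal :
    (∀ (A : Type*) (M : Submonoid (Function.End A)),
        (selfAction M).Nominal → ∀ (X : Type*) (ms : MSetOn M X), ms.Nominal) ∧
    (∀ (𝔸 : Type*) [Countable 𝔸] [Infinite 𝔸], ¬ (selfAction (finPerm 𝔸)).Nominal) := by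
  constructor
  · intro A M hnom X ms x
    obtain ⟨S, hSfin, hS⟩ := hnom 1
    refine ⟨S, hSfin, fun m m' h => ?_⟩
    have hmm : m * 1 = m' * 1 := hS m m' h
    rw [mul_one, mul_one] at hmm
    rw [hmm]
  · intro 𝔸 _ _ hnom
    classical
    obtain ⟨S, hSfin, hS⟩ := hnom 1
    obtain ⟨a, ha, b, hb, hab⟩ := hSfin.infinite_compl.nontrivial
    have hmem : ⇑(Equiv.swap a b) ∈ finPerm 𝔸 := by
      refine ⟨(Equiv.swap a b).bijective, Set.Finite.subset ((Set.finite_singleton a).insert b) ?_⟩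
      intro x hx
      by_contra hne
      simp only [Set.mem_insert_iff, Set.mem_singleton_iff, not_or] at hne
      exact hx (Equiv.swap_apply_of_ne_of_ne hne.2 hne.1)
    have heq : (⟨_, hmem⟩ : finPerm 𝔸) * 1 = 1 * 1 := by
      apply hS
      intro s hs
      have hsa : s ≠ a := fun e => ha (e ▸ hs)
      have hsb : s ≠ b := fun e => hb (e ▸ hs)
      exact Equiv.swap_apply_of_ne_of_ne hsa hsb
    rw [mul_one, mul_one] at heq
    have := congrArg (fun m : finPerm 𝔸 => m.1 a) heq
    simp only [Equiv.swap_apply_left] at this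
    exact hab this.symm
end

section
/- The category of supported sets over A is cocomplete, and the forgetful functor to Set preserves all colimits; the colimit of a diagram is the colimit of underlying sets, with support of a colimit element c given by the intersection of s(y) over all elements y in the diagram mapped to c by a colimit injection. -/
open CategoryTheory

/-- A supported set over `A`: a set with a finite support for each element. -/
structure SuppSet (A : Type) : Type 1 where
  carrier : Type
  supp : carrier → Set A
  finite : ∀ x, (supp x).Finite

variable {A : Type}

instance : Category (SuppSet A) where
  Hom X Y := {f : X.carrier → Y.carrier // ∀ x, Y.supp (f x) ⊆ X.supp x}
  id _ := ⟨fun x => x, fun _ => subset_rfl⟩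
  comp f g := ⟨fun x => g.1 (f.1 x), fun x => (g.2 _).trans (f.2 x)⟩
  id_comp _ := Subtype.ext rfl
  comp_id _ := Subtype.ext rfl
  assoc _ _ _ := Subtype.ext rfl

/-- The forgetful functor from supported sets to sets. -/
def Forget (A : Type) : SuppSet A ⥤ Type where
  obj X := X.carrier
  map f := TypeCat.ofHom f.1
  map_id _ := rfl
  map_comp _ _ := rfl

/-!
The colimit of `D` is the colimit `C` of the underlying sets, where `c ∈ C` gets the
intersection of the supports of all its preimages under the colimit injections: it is finite
since `c` has at least one preimage, and it is the largest support making every injection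
support-decreasing, which is what makes `C` universal among supported sets as well.
An arbitrary colimit cocone is isomorphic to this one, and isomorphisms preserve supports.
-/

open Limits

namespace SuppSet

lemma congr_hom {X Y : SuppSet A} {f g : X ⟶ Y} (h : f = g) (x : X.carrier) :
    f.1 x = g.1 x :=
  congrFun (congrArg Subtype.val h) x

lemma hom_inv_id_apply {X Y : SuppSet A} (e : X ≅ Y) (x : X.carrier) :
    e.inv.1 (e.hom.1 x) = x :=
  congr_hom e.hom_inv_id x

lemma iso_hom_injective {X Y : SuppSet A} (e : X ≅ Y) : Function.Injective e.hom.1 :=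
  Function.LeftInverse.injective (hom_inv_id_apply e)

lemma supp_iso_hom_apply {X Y : SuppSet A} (e : X ≅ Y) (x : X.carrier) :
    Y.supp (e.hom.1 x) = X.supp x := by
  refine (e.hom.2 x).antisymm ?_
  simpa only [hom_inv_id_apply] using e.inv.2 (e.hom.1 x)

variable {J : Type} [SmallCategory J] (D : J ⥤ SuppSet A)

lemma forget_ι_jointly_surjective (p : colimit (D ⋙ Forget A)) :
    ∃ j y, colimit.ι (D ⋙ Forget A) j y = p :=
  Types.jointly_surjective' p

noncomputable def colimitPt : SuppSet A where
  carrier := colimit (D ⋙ Forget A)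
  supp p := ⋂₀ {S : Set A | ∃ (j : J) (y : (D.obj j).carrier),
      colimit.ι (D ⋙ Forget A) j y = p ∧ S = (D.obj j).supp y}
  finite p := by
    obtain ⟨j, y, hy⟩ := forget_ι_jointly_surjective D p
    exact ((D.obj j).finite y).subset (Set.sInter_subset_of_mem ⟨j, y, hy, rfl⟩)

noncomputable def colimitCocone : Cocone D where
  pt := colimitPt D
  ι :=
    { app := fun j => ⟨colimit.ι (D ⋙ Forget A) j, fun y =>
        Set.sInter_subset_of_mem ⟨j, y, rfl, rfl⟩⟩
      naturality := fun _ _ f => Subtype.ext <| funext fun y =>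
        ConcreteCategory.congr_hom (colimit.w (D ⋙ Forget A) f) y }

lemma forget_desc_ι_apply (E : Cocone D) (j : J) (y : (D.obj j).carrier) :
    colimit.desc (D ⋙ Forget A) ((Forget A).mapCocone E) (colimit.ι (D ⋙ Forget A) j y) =
      (E.ι.app j).1 y :=
  ConcreteCategory.congr_hom (colimit.ι_desc ((Forget A).mapCocone E) j) y

noncomputable def colimitCoconeIsColimit : IsColimit (colimitCocone D) where
  desc E := ⟨colimit.desc (D ⋙ Forget A) ((Forget A).mapCocone E), by
    rintro p a ha S ⟨j, y, rfl, rfl⟩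
    exact (E.ι.app j).2 y (forget_desc_ι_apply D E j y ▸ ha)⟩
  fac E j := Subtype.ext <| funext <| forget_desc_ι_apply D E j
  uniq E m hm := Subtype.ext <| funext fun p => by
    obtain ⟨j, y, rfl⟩ := forget_ι_jointly_surjective D p
    exact (congr_hom (hm j) y).trans (forget_desc_ι_apply D E j y).symm

lemma supp_of_isColimit {c : Cocone D} (hc : IsColimit c) (p : c.pt.carrier) :
    c.pt.supp p = ⋂₀ {S : Set A | ∃ (j : J) (y : (D.obj j).carrier),
      (c.ι.app j).1 y = p ∧ S = (D.obj j).supp y} := by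
  let φ := hc.coconePointUniqueUpToIso (colimitCoconeIsColimit D)
  have hφ (j : J) (y : (D.obj j).carrier) :
      φ.hom.1 ((c.ι.app j).1 y) = colimit.ι (D ⋙ Forget A) j y :=
    congr_hom (hc.comp_coconePointUniqueUpToIso_hom (colimitCoconeIsColimit D) j) y
  rw [← supp_iso_hom_apply φ p]
  show ⋂₀ _ = ⋂₀ _
  congr 1
  ext S
  refine exists_congr fun j => exists_congr fun y => and_congr_left' ?_
  rw [← hφ]
  exact (iso_hom_injective φ).eq_iff

end SuppSet

instance : HasColimits (SuppSet A) where
  has_colimits_of_shape _ _ :=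
    { has_colimit := fun D => HasColimit.mk ⟨_, SuppSet.colimitCoconeIsColimit D⟩ }

noncomputable instance : PreservesColimits (Forget A) where
  preservesColimitsOfShape :=
    { preservesColimit := fun {D} =>
        preservesColimit_of_preserves_colimit_cocone (SuppSet.colimitCoconeIsColimit D)
          ((colimit.isColimit (D ⋙ Forget A)).ofIsoColimit
            (Cocone.ext (Iso.refl _) fun _ => rfl)) }

open Limits in
/-- `Supp(A)` is cocomplete, the forgetful functor preserves all colimits,
and the support of an element `p` of a colimit is the intersection of the supports of
all elements of the diagram mapped to `p` by a colimit injection. -/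
theorem suppSet_cocomplete_forget_preserves_colimits (A : Type) :
    HasColimits (SuppSet A) ∧
    Nonempty (PreservesColimits (Forget A)) ∧
    (∀ (J : Type) (_ : SmallCategory J) (D : J ⥤ SuppSet A)
        (c : Cocone D) (_ : IsColimit c) (p : c.pt.carrier),
      c.pt.supp p = ⋂₀ {S : Set A | ∃ (j : J) (y : (D.obj j).carrier),
        (c.ι.app j).1 y = p ∧ S = (D.obj j).supp y}) :=
  ⟨inferInstance, ⟨inferInstance⟩, fun _ _ D _ hc => SuppSet.supp_of_isColimit D hc⟩
end

section
/- The category of supported sets over A is complete: the limit of a diagram D is the subset of elements x of the limit of underlying sets such that the union over all objects Y of the diagram of s(pr_Y(x)) is finite, with this union as the support of x. -/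
open CategoryTheory

variable {A : Type}

open Limits

/-- The limit of a diagram of supported sets: those compatible families whose
supports have finite union, supported by that union. -/
def limitObj {J : Type} [SmallCategory J] (D : J ⥤ SuppSet A) : SuppSet A where
  carrier := {x : ∀ j, (D.obj j).carrier //
      (∀ {j j'} (f : j ⟶ j'), (D.map f).1 (x j) = x j') ∧
      (⋃ j, (D.obj j).supp (x j)).Finite}
  supp := fun x => ⋃ j, (D.obj j).supp (x.1 j)
  finite := fun x => x.2.2

/-- The limiting cone on `limitObj`. -/
def limitCone {J : Type} [SmallCategory J] (D : J ⥤ SuppSet A) : Cone D where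
  pt := limitObj D
  π :=
    { app := fun j => ⟨fun x => x.1 j,
        fun x => Set.subset_iUnion (fun j => (D.obj j).supp (x.1 j)) j⟩
      naturality := fun j j' f => Subtype.ext (funext fun x => (x.2.1 f).symm) }

/- The legs of a cone with apex `X` send `x : X` to a compatible family whose
supports all lie in the finite set `s_X(x)`, so their union is finite and contained in
`s_X(x)`; hence the family lies in `limitObj D` and the induced map is support-decreasing.
Uniqueness holds because an element of `limitObj D` is determined by its components. -/

namespace SuppSet

variable {J : Type} [SmallCategory J] {D : J ⥤ SuppSet A}

theorem iUnion_supp_cone_subset (s : Cone D) (x : s.pt.carrier) :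
    ⋃ j, (D.obj j).supp ((s.π.app j).1 x) ⊆ s.pt.supp x :=
  Set.iUnion_subset fun j => (s.π.app j).2 x

def liftLimitCone (s : Cone D) : s.pt ⟶ limitObj D :=
  ⟨fun x => ⟨fun j => (s.π.app j).1 x,
      fun f => congrFun (congrArg Subtype.val (s.w f)) x,
      (s.pt.finite x).subset (iUnion_supp_cone_subset s x)⟩,
    iUnion_supp_cone_subset s⟩

theorem limitObj_hom_ext {X : SuppSet A} {f g : X ⟶ limitObj D}
    (h : ∀ j, f ≫ (limitCone D).π.app j = g ≫ (limitCone D).π.app j) : f = g :=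
  Subtype.ext <| funext fun x => Subtype.ext <| funext fun j =>
    congrFun (congrArg Subtype.val (h j)) x

def isLimitLimitCone (D : J ⥤ SuppSet A) : IsLimit (limitCone D) where
  lift := liftLimitCone
  fac _ _ := rfl
  uniq _ _ hm := limitObj_hom_ext hm

instance : HasLimits (SuppSet A) where
  has_limits_of_shape _ _ :=
    { has_limit := fun D => ⟨⟨⟨limitCone D, isLimitLimitCone D⟩⟩⟩ }

end SuppSet

/-- `Supp(A)` is complete; the limit of a diagram `D` is the subset of the
limit of underlying sets consisting of the elements whose supports have finite union,
with that union as support. -/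
theorem suppSet_complete (A : Type) :
    HasLimits (SuppSet A) ∧
    (∀ (J : Type) (_ : SmallCategory J) (D : J ⥤ SuppSet A),
      Nonempty (IsLimit (limitCone D))) :=
  ⟨inferInstance, fun _ _ D => ⟨SuppSet.isLimitLimitCone D⟩⟩
end

section
/- For every supported set E, the functor (−) × E on supported sets is left adjoint to the exponential functor (−)^E, where X^E consists of all functions f: E → X such that the union over e ∈ E of s_X(f(e)) \ s_E(e) is finite, with this union as the support of f. Hence Supp(A) is cartesian closed. -/
open CategoryTheory

variable {A : Type}

/-- The product functor `(−) × E` on supported sets, with union supports. -/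
def prodFunctor (E : SuppSet A) : SuppSet A ⥤ SuppSet A where
  obj X :=
    { carrier := X.carrier × E.carrier
      supp := fun p => X.supp p.1 ∪ E.supp p.2
      finite := fun p => (X.finite p.1).union (E.finite p.2) }
  map f := ⟨fun p => (f.1 p.1, p.2), fun p => Set.union_subset_union_left _ (f.2 p.1)⟩
  map_id _ := Subtype.ext rfl
  map_comp _ _ := Subtype.ext rfl

/-- The exponential object `X^E`: functions `E → X` such that the union of
`supp(f e) \ supp(e)` is finite, supported by that union. -/
def expObj (E X : SuppSet A) : SuppSet A where
  carrier := {f : E.carrier → X.carrier // (⋃ e, X.supp (f e) \ E.supp e).Finite}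
  supp := fun f => ⋃ e, X.supp (f.1 e) \ E.supp e
  finite := fun f => f.2

/-! The adjunction is plain currying: the support `⋃ e, supp (f e) \ supp e` of `X^E`
is chosen so that a curried map is support-decreasing exactly when its uncurried form is. -/

namespace SuppSet

variable {E X Y : SuppSet A}

def expFunctor (E : SuppSet A) : SuppSet A ⥤ SuppSet A where
  obj X := expObj E X
  map f :=
    ⟨fun g => ⟨fun e => f.1 (g.1 e),
      g.2.subset (Set.iUnion_mono fun _ => Set.sdiff_subset_sdiff_left (f.2 _))⟩,
      fun _ => Set.iUnion_mono fun _ => Set.sdiff_subset_sdiff_left (f.2 _)⟩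
  map_id _ := rfl
  map_comp _ _ := rfl

lemma iUnion_supp_curry_subset (φ : (prodFunctor E).obj X ⟶ Y) (x : X.carrier) :
    (⋃ e, Y.supp (φ.1 (x, e)) \ E.supp e) ⊆ X.supp x :=
  Set.iUnion_subset fun e _ ha => (φ.2 (x, e) ha.1).resolve_right ha.2

lemma supp_uncurry_subset (ψ : X ⟶ (expFunctor E).obj Y) (x : X.carrier) (e : E.carrier) :
    Y.supp ((ψ.1 x).1 e) ⊆ X.supp x ∪ E.supp e := fun a ha => by
  by_cases he : a ∈ E.supp e
  · exact Or.inr he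
  · exact Or.inl (ψ.2 x (Set.mem_iUnion.2 ⟨e, ha, he⟩))

def curry (φ : (prodFunctor E).obj X ⟶ Y) : X ⟶ (expFunctor E).obj Y :=
  ⟨fun x => ⟨fun e => φ.1 (x, e), (X.finite x).subset (iUnion_supp_curry_subset φ x)⟩,
    iUnion_supp_curry_subset φ⟩

def uncurry (ψ : X ⟶ (expFunctor E).obj Y) : (prodFunctor E).obj X ⟶ Y :=
  ⟨fun p => (ψ.1 p.1).1 p.2, fun p => supp_uncurry_subset ψ p.1 p.2⟩

def curryEquiv (E X Y : SuppSet A) :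
    ((prodFunctor E).obj X ⟶ Y) ≃ (X ⟶ (expFunctor E).obj Y) where
  toFun := curry
  invFun := uncurry
  left_inv _ := rfl
  right_inv _ := rfl

def prodExpAdjunction (E : SuppSet A) : prodFunctor E ⊣ expFunctor E :=
  Adjunction.mkOfHomEquiv
    { homEquiv := curryEquiv E
      homEquiv_naturality_left_symm _ _ := rfl
      homEquiv_naturality_right _ _ := rfl }

end SuppSet

/-- For every supported set `E`, the functor `(−) × E` is left adjoint to
the exponential functor `(−)^E` given on objects by `expObj E`; hence `Supp(A)` is
cartesian closed. -/
theorem prod_adj_exp (A : Type) (E : SuppSet A) :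
    ∃ Exp : SuppSet A ⥤ SuppSet A,
      (∀ X : SuppSet A, Exp.obj X = expObj E X) ∧
      Nonempty (prodFunctor E ⊣ Exp) :=
  ⟨SuppSet.expFunctor E, fun _ => rfl, ⟨SuppSet.prodExpAdjunction E⟩⟩
end

section
/- An epimorphism e: X → Y in the category of supported sets is a regular epimorphism (a coequalizer) if and only if for every y ∈ Y, s_Y(y) equals the intersection of s_X(x) over all x with e(x) = y. -/
open CategoryTheory

variable {A : Type}

/-!
Epimorphisms are surjective, and `s_Y(y) ⊆ ⋂ {s_X(x) | e(x) = y}` holds for every morphism `e`.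
If equality holds, every map coequalizing the kernel pair of `e` (whose supports are unions) is
constant on fibres and descends along `e` to a support-decreasing map, so `e` is its coequalizer.
Conversely, `e` stays a morphism when `Y` is given the intersection supports; if `e` is a
coequalizer, this map factors through `e` by a map that is the identity on `Y.carrier`, which forces
the reverse inclusion.
-/

open Limits

namespace SuppSet

variable {X Y : SuppSet A}

lemma hom_ext {f g : X ⟶ Y} (h : ∀ x, f.1 x = g.1 x) : f = g :=
  Subtype.ext (funext h)

/-- The two-point test object `Prop` with empty supports detects surjectivity. -/
lemma surjective_of_epi (e : X ⟶ Y) [Epi e] : Function.Surjective e.1 := by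
  let P : SuppSet A := ⟨Prop, fun _ => ∅, fun _ => Set.finite_empty⟩
  let inRange : Y ⟶ P := ⟨fun y => ∃ x, e.1 x = y, fun _ => Set.empty_subset _⟩
  let top : Y ⟶ P := ⟨fun _ => True, fun _ => Set.empty_subset _⟩
  have h : inRange = top := (cancel_epi e).1 (hom_ext fun x => eq_true ⟨x, rfl⟩)
  intro y
  exact of_eq_true (congrArg (·.1 y) h)

def fiberSupp (e : X ⟶ Y) (y : Y.carrier) : Set A :=
  ⋂₀ {S : Set A | ∃ x : X.carrier, e.1 x = y ∧ S = X.supp x}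

lemma fiberSupp_subset (e : X ⟶ Y) (x : X.carrier) : fiberSupp e (e.1 x) ⊆ X.supp x :=
  Set.sInter_subset_of_mem ⟨x, rfl, rfl⟩

lemma subset_fiberSupp_iff (e : X ⟶ Y) (y : Y.carrier) (S : Set A) :
    S ⊆ fiberSupp e y ↔ ∀ x, e.1 x = y → S ⊆ X.supp x := by
  simp only [fiberSupp, Set.subset_sInter_iff, Set.mem_ofPred_eq]
  exact ⟨fun h x hx => h _ ⟨x, hx, rfl⟩, fun h _ ⟨x, hx, hS⟩ => hS ▸ h x hx⟩

lemma supp_subset_fiberSupp (e : X ⟶ Y) (y : Y.carrier) : Y.supp y ⊆ fiberSupp e y :=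
  (subset_fiberSupp_iff e y _).2 fun x hx => hx ▸ e.2 x

lemma fiberSupp_finite {e : X ⟶ Y} (he : Function.Surjective e.1) (y : Y.carrier) :
    (fiberSupp e y).Finite := by
  obtain ⟨x, rfl⟩ := he y
  exact (X.finite x).subset (fiberSupp_subset e x)

def withFiberSupp {e : X ⟶ Y} (he : Function.Surjective e.1) : SuppSet A :=
  ⟨Y.carrier, fiberSupp e, fiberSupp_finite he⟩

def toWithFiberSupp {e : X ⟶ Y} (he : Function.Surjective e.1) : X ⟶ withFiberSupp he :=
  ⟨e.1, fiberSupp_subset e⟩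

lemma supp_eq_fiberSupp_of_regularEpi {e : X ⟶ Y} (re : RegularEpi e)
    (he : Function.Surjective e.1) (y : Y.carrier) : Y.supp y = fiberSupp e y := by
  refine (supp_subset_fiberSupp e y).antisymm ?_
  have w : re.left ≫ toWithFiberSupp he = re.right ≫ toWithFiberSupp he :=
    hom_ext fun p => congrArg (·.1 p) re.w
  let h : Y ⟶ withFiberSupp he := re.isColimit.desc (Cofork.ofπ _ w)
  have fac : e ≫ h = toWithFiberSupp he := re.isColimit.fac (Cofork.ofπ _ w) .one
  have h_id : h.1 y = y := by
    obtain ⟨x, rfl⟩ := he y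
    exact congrArg (·.1 x) fac
  have := h.2 y
  rwa [h_id] at this

def kernelPairObj (e : X ⟶ Y) : SuppSet A :=
  ⟨{p : X.carrier × X.carrier // e.1 p.1 = e.1 p.2},
    fun p => X.supp p.1.1 ∪ X.supp p.1.2, fun _ => (X.finite _).union (X.finite _)⟩

def kernelPairFst (e : X ⟶ Y) : kernelPairObj e ⟶ X :=
  ⟨fun p => p.1.1, fun _ => Set.subset_union_left⟩

def kernelPairSnd (e : X ⟶ Y) : kernelPairObj e ⟶ X :=
  ⟨fun p => p.1.2, fun _ => Set.subset_union_right⟩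

lemma kernelPair_condition (e : X ⟶ Y) : kernelPairFst e ≫ e = kernelPairSnd e ≫ e :=
  hom_ext fun p => p.2

lemma apply_eq_of_kernelPair {e : X ⟶ Y} {W : SuppSet A} {π : X ⟶ W}
    (hπ : kernelPairFst e ≫ π = kernelPairSnd e ≫ π) {x x' : X.carrier}
    (hx : e.1 x = e.1 x') : π.1 x = π.1 x' :=
  congrArg (·.1 ⟨(x, x'), hx⟩) hπ

noncomputable def isColimitKernelPair {e : X ⟶ Y} (he : Function.Surjective e.1)
    (hsupp : ∀ y, Y.supp y = fiberSupp e y) :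
    IsColimit (Cofork.ofπ e (kernelPair_condition e)) :=
  Cofork.IsColimit.mk _
    (fun s => ⟨fun y => s.π.1 (Function.surjInv he y), fun y => by
      change _ ⊆ Y.supp y
      rw [hsupp y, subset_fiberSupp_iff]
      intro x hx
      change s.pt.supp (s.π.1 (Function.surjInv he y)) ⊆ X.supp x
      rw [apply_eq_of_kernelPair s.condition (x' := x) ((Function.surjInv_eq he y).trans hx.symm)]
      exact s.π.2 x⟩)
    (fun s => hom_ext fun x =>
      apply_eq_of_kernelPair s.condition (Function.surjInv_eq he (e.1 x)))
    (fun s m hm => hom_ext fun y => by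
      change m.1 y = s.π.1 (Function.surjInv he y)
      rw [← hm]
      exact congrArg m.1 (Function.surjInv_eq he y).symm)

end SuppSet

open SuppSet in
/-- An epimorphism `e : X → Y` in `Supp(A)` is regular (a coequalizer)
iff `s_Y(y) = ⋂ { s_X(x) | e(x) = y }` for every `y ∈ Y`. -/
theorem suppSet_regularEpi_iff (A : Type) (X Y : SuppSet A) (e : X ⟶ Y) (he : Epi e) :
    Nonempty (RegularEpi e) ↔
    ∀ y : Y.carrier,
      Y.supp y = ⋂₀ {S : Set A | ∃ x : X.carrier, e.1 x = y ∧ S = X.supp x} := by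
  have hsurj : Function.Surjective e.1 := surjective_of_epi e
  exact ⟨fun ⟨re⟩ => supp_eq_fiberSupp_of_regularEpi re hsurj,
    fun hsupp => ⟨⟨_, _, _, kernelPair_condition e, isColimitKernelPair hsurj hsupp⟩⟩⟩
end
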